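/- Suppose R is irreducible and let γ be its highest root, i.e. the unique root such that γ − α ∈ ℕΔ for every root α. Then γ∨ is the unique coroot that is both short and dominant (dominant meaning ⟨α, γ∨⟩ ≥ 0 for all α ∈ R₊). -/

import Mathlib

open scoped BigOperators Classical

noncomputable section

/-- Data of a finite crystallographic root system in a pair of vector spaces `V`, `V'`
(in perfect duality via `pair`), with a chosen base `Δ` and a cocharacter lattice `X`. -/
structure RootSystemData (V V' : Type) [AddCommGroup V] [Module ℝ V]
    [FiniteDimensional ℝ V] [AddCommGroup V'] [Module ℝ V'] [FiniteDimensional ℝ V'] where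
  /-- The canonical pairing between `V` and `V'`. -/
  pair : V →ₗ[ℝ] V' →ₗ[ℝ] ℝ
  /-- The (finite) set of roots. -/
  R : Finset V
  /-- The coroot attached to a root. -/
  coroot : V → V'
  root_ne_zero : ∀ α ∈ R, α ≠ (0 : V)
  neg_mem : ∀ α ∈ R, -α ∈ R
  coroot_neg : ∀ α ∈ R, coroot (-α) = -coroot α
  pair_self_eq_two : ∀ α ∈ R, pair α (coroot α) = 2
  crystallographic : ∀ α ∈ R, ∀ β ∈ R, ∃ n : ℤ, pair α (coroot β) = (n : ℝ)
  reflect_root_mem : ∀ α ∈ R, ∀ β ∈ R, β - pair β (coroot α) • α ∈ R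
  reflect_coroot_mem : ∀ α ∈ R, ∀ β ∈ R,
    coroot β - pair α (coroot β) • coroot α ∈ coroot '' R
  /-- The chosen base (set of simple roots). -/
  Δ : Finset V
  base_subset : Δ ⊆ R
  base_indep : LinearIndependent ℝ (fun a : (Δ : Set V) => (a : V))
  base_generates : ∀ α ∈ R,
    α ∈ AddSubmonoid.closure (Δ : Set V) ∨ -α ∈ AddSubmonoid.closure (Δ : Set V)
  /-- The lattice `X∨`. -/
  X : AddSubgroup V'
  coroot_mem_X : ∀ α ∈ R, coroot α ∈ X
  X_le_span : (X : Set V') ⊆ (Submodule.span ℝ (coroot '' (R : Set V)) : Set V')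
  pair_X_int : ∀ α ∈ R, ∀ x ∈ X, ∃ n : ℤ, pair α x = (n : ℝ)

namespace RootSystemData

variable {V V' : Type} [AddCommGroup V] [Module ℝ V] [FiniteDimensional ℝ V]
  [AddCommGroup V'] [Module ℝ V'] [FiniteDimensional ℝ V']
  (D : RootSystemData V V')

/-- The set `R₊` of positive roots: roots which are `ℕ`-linear combinations of the base. -/
def Rpos : Finset V := D.R.filter fun α => α ∈ AddSubmonoid.closure (D.Δ : Set V)

/-- The coroot lattice `Q∨`. -/
def Qc : AddSubgroup V' := AddSubgroup.closure (D.coroot '' (D.R : Set V))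

/-- The positive cone `Q∨₊` generated by the coroots of the positive roots. -/
def Qpos : AddSubmonoid V' := AddSubmonoid.closure (D.coroot '' (D.Rpos : Set V))

/-- The dominance order: `ν ≤ λ` iff `λ - ν ∈ Q∨₊`. -/
def leQ (ν lam : V') : Prop := lam - ν ∈ D.Qpos

/-- Dominance: `ν` is dominant iff `⟨α, ν⟩ ≥ 0` for every positive root `α`. -/
def Dominant (ν : V') : Prop := ∀ α ∈ D.Rpos, 0 ≤ D.pair α ν

/-- The set `X∨₊` of dominant elements of the lattice. -/
def Xplus : Set V' := {x | x ∈ D.X ∧ D.Dominant x}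

/-- The set `M` of minimal elements of `X∨₊ \ {0}` for the dominance order. -/
def MSet : Set V' :=
  {μ | μ ∈ D.Xplus ∧ μ ≠ 0 ∧ ∀ ν ∈ D.Xplus, ν ≠ 0 → D.leQ ν μ → ν = μ}

/-- The reflection on `V` attached to a root `α`. -/
def reflV (α : V) (hα : α ∈ D.R) : V ≃ₗ[ℝ] V :=
  Module.reflection (show D.pair.flip (D.coroot α) α = 2 from D.pair_self_eq_two α hα)

/-- The reflection on `V'` attached to a root `α`. -/
def reflV' (α : V) (hα : α ∈ D.R) : V' ≃ₗ[ℝ] V' :=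
  Module.reflection (show D.pair α (D.coroot α) = 2 from D.pair_self_eq_two α hα)

/-- The Weyl group `W`, acting simultaneously on `V` (first component)
and on `V'` (second component); it is generated by the pairs of reflections
attached to the roots. -/
def weyl : Subgroup ((V ≃ₗ[ℝ] V) × (V' ≃ₗ[ℝ] V')) :=
  Subgroup.closure {g | ∃ α, ∃ hα : α ∈ D.R, g = (D.reflV α hα, D.reflV' α hα)}

/-- The orbit `Wμ` of `μ ∈ V'` under the Weyl group. -/
def Worbit (μ : V') : Set V' := {ν | ∃ g ∈ D.weyl, ν = g.2 μ}

/-- The set `Ω(λ) = {ν ∈ X∨ : wν ≤ λ for all w ∈ W}`. -/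
def Omega (lam : V') : Set V' :=
  {ν | ν ∈ D.X ∧ ∀ g ∈ D.weyl, D.leQ (g.2 ν) lam}

/-- Two roots are linked when they are non-orthogonal. -/
def Linked (α β : V) : Prop := α ∈ D.R ∧ β ∈ D.R ∧ D.pair α (D.coroot β) ≠ 0

/-- Two roots lie in the same irreducible component iff they are connected by a
chain of non-orthogonal roots. -/
def SameComponent (α β : V) : Prop := Relation.EqvGen D.Linked α β

/-- The half-sum `ρ` of the positive roots. -/
def rho : V := (2 : ℝ)⁻¹ • ∑ α ∈ D.Rpos, α

/-- A `W`-invariant inner product on `V'`. -/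
structure WInvInner where
  form : V' →ₗ[ℝ] V' →ₗ[ℝ] ℝ
  symm : ∀ x y, form x y = form y x
  posdef : ∀ x, x ≠ 0 → 0 < form x x
  invariant : ∀ g ∈ D.weyl, ∀ x y, form (g.2 x) (g.2 y) = form x y

/-- `β` is a root whose coroot is short: for every `W`-invariant inner product `B` on `V'`,
`B(β∨, β∨) ≤ B(α∨, α∨)` for every root `α` in the same irreducible component as `β`. -/
def IsShortCoroot (β : V) : Prop :=
  β ∈ D.R ∧ ∀ B : D.WInvInner, ∀ α ∈ D.R, D.SameComponent α β →
    B.form (D.coroot β) (D.coroot β) ≤ B.form (D.coroot α) (D.coroot α)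

end RootSystemData

/-!
Fix a linear height `ht` with `ht δ = 1` on the simple roots. As `γ - α ∈ ℕΔ` for every root `α`,
`γ` is the unique root of maximal height; comparing `γ` with `s_γ α` and `-s_γ α` gives
`⟨α, γ∨⟩ ≥ 0` for positive `α` and `⟨α, γ∨⟩ ≤ 1` for `α ≠ γ`.

For a `W`-invariant form `B`, `⟨α, β∨⟩ B(α∨, α∨) = ⟨β, α∨⟩ B(β∨, β∨)`, and the reflections preserve
coroot lengths. A root of maximal height among those whose coroot has a given length therefore
has a dominant coroot. For a root `β ≠ γ` with `β∨` dominant, `⟨γ, β∨⟩ ≥ 2` and `⟨β, γ∨⟩ ≤ 1`,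
whence `B(β∨, β∨) ≥ 2 B(γ∨, γ∨)`: this proves shortness of `γ∨`, and uniqueness as soon as one
`W`-invariant inner product exists. One is `∑ α, ⟨α, x⟩ ⟨α, y⟩` plus a positive form on
`V' ⧸ span R∨`, because a vector of `span R∨` fixed by all reflections vanishes: its lift to
`ℝ^{R∨}` orthogonal to the relations is invariant under `c ↦ -c` yet orthogonal to `e_c + e_{-c}`.
-/

open scoped InnerProductSpace

theorem LinearIsometry.eq_of_sub_mem_of_mem_orthogonal {E : Type*} [NormedAddCommGroup E]
    [InnerProductSpace ℝ E] {N : Submodule ℝ E} (σ : E →ₗᵢ[ℝ] E) {f : E} (hf : f ∈ Nᗮ)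
    (hσf : σ f - f ∈ N) : σ f = f := by
  have h : ⟪σ f - f, f⟫_ℝ = 0 := Submodule.inner_right_of_mem_orthogonal hσf hf
  rw [inner_sub_left, real_inner_self_eq_norm_sq] at h
  have : ‖σ f - f‖ ^ 2 = 0 := by rw [norm_sub_sq_real, σ.norm_map]; linarith
  simpa [sub_eq_zero] using this

theorem eq_zero_of_mem_span_of_reflections {M : Type*} [AddCommGroup M] [Module ℝ M]
    (C : Finset M) {x : M} (hx : x ∈ Submodule.span ℝ (C : Set M))
    (hrefl : ∀ c ∈ C, ∃ s : M →ₗ[ℝ] M,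
      Function.Involutive s ∧ s c = -c ∧ (∀ d ∈ C, s d ∈ C) ∧ s x = x) :
    x = 0 := by
  let π : EuclideanSpace ℝ C →ₗ[ℝ] M :=
    ∑ c : C, (EuclideanSpace.proj (𝕜 := ℝ) c).toLinearMap.smulRight (c : M)
  have hπ : ∀ g, π g = ∑ c : C, g c • (c : M) := fun g => by simp [π]
  obtain ⟨g, rfl⟩ : ∃ g, π g = x := by
    obtain ⟨g, hg⟩ := Submodule.mem_span_finset'.1 hx
    exact ⟨WithLp.toLp 2 g, by simpa [hπ] using hg⟩
  obtain ⟨n, hn, f, hf, rfl⟩ := (LinearMap.ker π).exists_add_mem_mem_orthogonal g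
  suffices hf0 : ∀ c : C, f c = 0 by
    rw [map_add, LinearMap.mem_ker.1 hn, zero_add, hπ]; simp [hf0]
  intro c
  obtain ⟨s, hs, hsc, hsC, hsx⟩ := hrefl c c.2
  rw [map_add, LinearMap.mem_ker.1 hn, zero_add] at hsx
  have hτ : Function.Involutive fun d : C => (⟨s d, hsC d d.2⟩ : C) :=
    fun d => Subtype.ext (hs d)
  set τ := hτ.toPerm _
  let σ := LinearIsometryEquiv.piLpCongrLeft 2 ℝ ℝ τ
  have hσ : ∀ v, π (σ v) = s (π v) := by
    intro v
    rw [hπ, hπ, map_sum, ← Equiv.sum_comp τ]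
    simp [σ, τ, Function.Involutive.toPerm, hs _]
  -- The lift of `x` orthogonal to `ker π` is unique, hence fixed by the permutation `σ` induced by `s`.
  have hσf : σ f = f := by
    refine σ.toLinearIsometry.eq_of_sub_mem_of_mem_orthogonal hf ?_
    rw [LinearMap.mem_ker, map_sub]
    exact sub_eq_zero.2 ((hσ f).trans hsx)
  have hneg : f (τ c) = f c := by
    simpa [σ, τ, hs _] using congrArg (fun v => v (τ c)) hσf.symm
  have hpair : ⟪EuclideanSpace.single c 1 + EuclideanSpace.single (τ c) 1, f⟫_ℝ = 0 := by
    refine Submodule.inner_right_of_mem_orthogonal ?_ hf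
    rw [LinearMap.mem_ker, map_add, hπ, hπ]
    simp [τ, Function.Involutive.toPerm, hsc]
  rw [inner_add_left, EuclideanSpace.inner_single_left, EuclideanSpace.inner_single_left,
    hneg] at hpair
  simpa using hpair

namespace RootSystemData

variable {V V' : Type} [AddCommGroup V] [Module ℝ V] [FiniteDimensional ℝ V]
  [AddCommGroup V'] [Module ℝ V'] [FiniteDimensional ℝ V']
  (D : RootSystemData V V')

lemma coroot_ne_zero {α : V} (hα : α ∈ D.R) : D.coroot α ≠ 0 := by
  intro h
  simpa [h] using D.pair_self_eq_two α hα

lemma mem_Rpos_of_mem_Δ {δ : V} (hδ : δ ∈ D.Δ) : δ ∈ D.Rpos :=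
  Finset.mem_filter.2 ⟨D.base_subset hδ, AddSubmonoid.subset_closure hδ⟩

lemma pair_nonneg_of_mem_closure {x : V'} (hx : ∀ δ ∈ D.Δ, 0 ≤ D.pair δ x) {v : V}
    (hv : v ∈ AddSubmonoid.closure (D.Δ : Set V)) : 0 ≤ D.pair v x := by
  induction hv using AddSubmonoid.closure_induction with
  | mem v hv => exact hx v hv
  | zero => simp
  | add u w _ _ hu hw => rw [map_add, LinearMap.add_apply]; exact add_nonneg hu hw

def corootSpan : Submodule ℝ V' := Submodule.span ℝ (D.coroot '' (D.R : Set V))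

section Reflection

variable {D} {α : V} (hα : α ∈ D.R)

lemma reflV_apply (v : V) : D.reflV α hα v = v - D.pair v (D.coroot α) • α := rfl

lemma reflV'_apply (x : V') : D.reflV' α hα x = x - D.pair α x • D.coroot α := rfl

lemma reflV_mem {β : V} (hβ : β ∈ D.R) : D.reflV α hα β ∈ D.R :=
  D.reflect_root_mem α hα β hβ

lemma reflV_reflV (v : V) : D.reflV α hα (D.reflV α hα v) = v :=
  Module.involutive_reflection _ v

lemma reflV'_reflV' (x : V') : D.reflV' α hα (D.reflV' α hα x) = x :=
  Module.involutive_reflection _ x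

lemma reflV'_coroot : D.reflV' α hα (D.coroot α) = -D.coroot α :=
  Module.reflection_apply_self _

lemma pair_reflV' (v : V) (x : V') :
    D.pair v (D.reflV' α hα x) = D.pair (D.reflV α hα v) x := by
  simp only [reflV_apply, reflV'_apply, map_sub, map_smul, LinearMap.sub_apply,
    LinearMap.smul_apply, smul_eq_mul]
  ring

lemma reflV'_sub_self_mem_corootSpan (x : V') : D.reflV' α hα x - x ∈ D.corootSpan := by
  rw [reflV'_apply, sub_sub_cancel_left]
  exact Submodule.neg_mem _
    (Submodule.smul_mem _ _ (Submodule.subset_span (Set.mem_image_of_mem _ hα)))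

lemma reflV_reflV'_mem_weyl : (D.reflV α hα, D.reflV' α hα) ∈ D.weyl :=
  Subgroup.subset_closure ⟨α, hα, rfl⟩

lemma sum_comp_reflV {M : Type*} [AddCommMonoid M] (f : V → M) :
    ∑ β ∈ D.R, f (D.reflV α hα β) = ∑ β ∈ D.R, f β :=
  Finset.sum_nbij' _ _ (fun _ => reflV_mem hα) (fun _ => reflV_mem hα)
    (fun β _ => reflV_reflV hα β) (fun β _ => reflV_reflV hα β) fun _ _ => rfl

end Reflection

lemma eq_zero_of_mem_corootSpan {x : V'} (hx : x ∈ D.corootSpan)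
    (hpair : ∀ α ∈ D.R, D.pair α x = 0) : x = 0 := by
  refine eq_zero_of_mem_span_of_reflections (D.R.image D.coroot)
    (by simpa [corootSpan] using hx) ?_
  intro c hc
  obtain ⟨α, hα, rfl⟩ := Finset.mem_image.1 hc
  refine ⟨D.reflV' α hα, reflV'_reflV' hα, reflV'_coroot hα, fun d hd => ?_, ?_⟩
  · obtain ⟨β, hβ, rfl⟩ := Finset.mem_image.1 hd
    obtain ⟨β', hβ', h⟩ := D.reflect_coroot_mem α hα β hβ
    exact Finset.mem_image.2 ⟨β', hβ', h.trans (reflV'_apply hα _).symm⟩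
  · simp [reflV'_apply, hpair α hα]

lemma forall_weyl_invariant_of_reflV' (F : V' →ₗ[ℝ] V' →ₗ[ℝ] ℝ)
    (hF : ∀ α (hα : α ∈ D.R) x y, F (D.reflV' α hα x) (D.reflV' α hα y) = F x y) :
    ∀ g ∈ D.weyl, ∀ x y, F (g.2 x) (g.2 y) = F x y := by
  intro g hg
  induction hg using Subgroup.closure_induction with
  | mem g hg => obtain ⟨α, hα, rfl⟩ := hg; exact hF α hα
  | one => exact fun x y => rfl
  | mul g h _ _ hg hh => exact fun x y => (hg _ _).trans (hh x y)
  | inv g _ hg =>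
    intro x y
    rw [← hg]
    simp

lemma nonempty_wInvInner : Nonempty D.WInvInner := by
  let b := Module.finBasis ℝ (V' ⧸ D.corootSpan)
  let q : Fin _ → V' →ₗ[ℝ] ℝ := fun i => b.coord i ∘ₗ D.corootSpan.mkQ
  let F : V' →ₗ[ℝ] V' →ₗ[ℝ] ℝ :=
    ∑ β ∈ D.R, (LinearMap.mul ℝ ℝ).compl₁₂ (D.pair β) (D.pair β) +
      ∑ i, (LinearMap.mul ℝ ℝ).compl₁₂ (q i) (q i)
  have hF : ∀ x y, F x y = ∑ β ∈ D.R, D.pair β x * D.pair β y + ∑ i, q i x * q i y := by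
    simp [F]
  refine ⟨⟨F, fun x y => by simp only [hF, mul_comm], fun x hx => ?_,
    D.forall_weyl_invariant_of_reflV' F fun α hα x y => ?_⟩⟩
  · rw [hF]
    have hR : 0 ≤ ∑ β ∈ D.R, D.pair β x * D.pair β x :=
      Finset.sum_nonneg fun _ _ => mul_self_nonneg _
    have hq : 0 ≤ ∑ i, q i x * q i x := Finset.sum_nonneg fun _ _ => mul_self_nonneg _
    refine lt_of_le_of_ne (add_nonneg hR hq) fun h0 => hx ?_
    obtain ⟨hR0, hq0⟩ := (add_eq_zero_iff_of_nonneg hR hq).1 h0.symm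
    refine D.eq_zero_of_mem_corootSpan ?_ ((Finset.sum_mul_self_eq_zero_iff _ _).1 hR0)
    rw [← Submodule.Quotient.mk_eq_zero, ← b.forall_coord_eq_zero_iff]
    simpa [q] using (Finset.sum_mul_self_eq_zero_iff _ _).1 hq0
  · rw [hF, hF]
    congr 1
    · simp only [pair_reflV' hα]
      exact sum_comp_reflV hα fun β => D.pair β x * D.pair β y
    · have hq : ∀ z, D.corootSpan.mkQ (D.reflV' α hα z) = D.corootSpan.mkQ z :=
        fun z => (Submodule.Quotient.eq _).2 (reflV'_sub_self_mem_corootSpan hα z)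
      simp only [q, LinearMap.comp_apply, hq]

lemma linearIndepOn_Δ : LinearIndepOn ℝ id (D.Δ : Set V) := D.base_indep

/-- The height function of `span Δ`, extended arbitrarily to `V`. -/
def height : V →ₗ[ℝ] ℝ := (Module.Basis.extend D.linearIndepOn_Δ).sumCoords

lemma height_of_mem_Δ {δ : V} (hδ : δ ∈ D.Δ) : D.height δ = 1 := by
  have h := (Module.Basis.extend D.linearIndepOn_Δ).sumCoords_self_apply
    (i := ⟨δ, Module.Basis.subset_extend D.linearIndepOn_Δ hδ⟩)
  rwa [Module.Basis.extend_apply_self] at h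

lemma height_pos_of_mem_closure {v : V} (hv : v ∈ AddSubmonoid.closure (D.Δ : Set V))
    (hv0 : v ≠ 0) : 0 < D.height v := by
  suffices v = 0 ∨ 0 < D.height v from this.resolve_left hv0
  clear hv0
  induction hv using AddSubmonoid.closure_induction with
  | mem v hv => exact Or.inr (by rw [D.height_of_mem_Δ hv]; exact one_pos)
  | zero => exact Or.inl rfl
  | add u w _ _ hu hw =>
    rcases hu with rfl | hu
    · simpa using hw
    rcases hw with rfl | hw
    · simpa using Or.inr hu
    exact Or.inr (by rw [map_add]; exact add_pos hu hw)

lemma height_nonneg_of_mem_closure {v : V} (hv : v ∈ AddSubmonoid.closure (D.Δ : Set V)) :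
    0 ≤ D.height v := by
  rcases eq_or_ne v 0 with rfl | hv0
  · simp
  · exact (D.height_pos_of_mem_closure hv hv0).le

section Highest

variable {D} {γ : V} (hhigh : ∀ α ∈ D.R, γ - α ∈ AddSubmonoid.closure (D.Δ : Set V))
include hhigh

lemma height_le_highest {α : V} (hα : α ∈ D.R) : D.height α ≤ D.height γ := by
  have := D.height_nonneg_of_mem_closure (hhigh α hα)
  rw [map_sub] at this
  linarith

lemma height_lt_highest {α : V} (hα : α ∈ D.R) (hne : α ≠ γ) :
    D.height α < D.height γ := by
  have := D.height_pos_of_mem_closure (hhigh α hα) (sub_ne_zero.2 hne.symm)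
  rw [map_sub] at this
  linarith

lemma height_highest_pos (hγ : γ ∈ D.R) : 0 < D.height γ := by
  have h2γ : γ - -γ ≠ 0 := by
    rw [sub_neg_eq_add, ← two_smul ℝ]
    exact smul_ne_zero two_ne_zero (D.root_ne_zero γ hγ)
  have := D.height_pos_of_mem_closure (hhigh _ (D.neg_mem γ hγ)) h2γ
  rw [map_sub, map_neg] at this
  linarith

lemma dominant_coroot_highest (hγ : γ ∈ D.R) : D.Dominant (D.coroot γ) := by
  intro α hα
  obtain ⟨hαR, hαpos⟩ := Finset.mem_filter.1 hα
  obtain ⟨n, hn⟩ := D.crystallographic α hαR γ hγ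
  by_contra hneg
  have hn1 : (n : ℝ) ≤ -1 := by
    have : n < 0 := by exact_mod_cast hn ▸ not_le.1 hneg
    exact_mod_cast Int.le_sub_one_of_lt this
  have h1 := height_le_highest hhigh (reflV_mem hγ hαR)
  have h2 := D.height_pos_of_mem_closure hαpos (D.root_ne_zero α hαR)
  have h3 := height_highest_pos hhigh hγ
  rw [reflV_apply, map_sub, map_smul, hn, smul_eq_mul] at h1
  nlinarith

lemma pair_coroot_highest_le_one (hγ : γ ∈ D.R) {α : V} (hα : α ∈ D.R) (hne : α ≠ γ) :
    D.pair α (D.coroot γ) ≤ 1 := by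
  obtain ⟨n, hn⟩ := D.crystallographic α hα γ hγ
  by_contra hgt
  have hn2 : (2 : ℝ) ≤ n := by
    have : 1 < n := by exact_mod_cast hn ▸ not_le.1 hgt
    exact_mod_cast this
  have h1 := height_le_highest hhigh (D.neg_mem _ (reflV_mem hγ hα))
  have h2 := height_lt_highest hhigh hα hne
  have h3 := height_highest_pos hhigh hγ
  rw [map_neg, reflV_apply, map_sub, map_smul, hn, smul_eq_mul] at h1
  nlinarith

lemma two_le_pair_highest_coroot {β : V} (hβ : β ∈ D.R)
    (hdom : ∀ δ ∈ D.Δ, 0 ≤ D.pair δ (D.coroot β)) : 2 ≤ D.pair γ (D.coroot β) := by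
  have := D.pair_nonneg_of_mem_closure hdom (hhigh β hβ)
  rw [map_sub, LinearMap.sub_apply, D.pair_self_eq_two β hβ] at this
  linarith

end Highest

namespace WInvInner

variable {D} (B : D.WInvInner)

lemma form_coroot_pos {α : V} (hα : α ∈ D.R) : 0 < B.form (D.coroot α) (D.coroot α) :=
  B.posdef _ (D.coroot_ne_zero hα)

lemma two_mul_form_coroot {α : V} (hα : α ∈ D.R) (x : V') :
    2 * B.form x (D.coroot α) = D.pair α x * B.form (D.coroot α) (D.coroot α) := by
  have h := B.invariant _ (reflV_reflV'_mem_weyl hα) x (D.coroot α)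
  rw [reflV'_coroot hα, reflV'_apply hα x] at h
  simp only [map_sub, map_smul, map_neg, LinearMap.sub_apply, LinearMap.smul_apply,
    smul_eq_mul] at h
  linarith

lemma pair_mul_form_coroot_comm {α β : V} (hα : α ∈ D.R) (hβ : β ∈ D.R) :
    D.pair α (D.coroot β) * B.form (D.coroot α) (D.coroot α) =
      D.pair β (D.coroot α) * B.form (D.coroot β) (D.coroot β) := by
  rw [← B.two_mul_form_coroot hα, ← B.two_mul_form_coroot hβ, B.symm]

lemma form_coroot_reflV {δ β : V} (hδ : δ ∈ D.R) (hβ : β ∈ D.R) :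
    B.form (D.coroot (D.reflV δ hδ β)) (D.coroot (D.reflV δ hδ β)) =
      B.form (D.coroot β) (D.coroot β) := by
  -- Both lengths equal the cross term `B((s_δ β)∨, s_δ β∨)`.
  have h1 := B.two_mul_form_coroot (reflV_mem hδ hβ) (D.reflV' δ hδ (D.coroot β))
  have h2 := B.two_mul_form_coroot hβ (D.reflV' δ hδ (D.coroot (D.reflV δ hδ β)))
  have h3 := B.invariant _ (reflV_reflV'_mem_weyl hδ)
    (D.reflV' δ hδ (D.coroot (D.reflV δ hδ β))) (D.coroot β)
  rw [pair_reflV', reflV_reflV, D.pair_self_eq_two β hβ] at h1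
  rw [pair_reflV', D.pair_self_eq_two _ (reflV_mem hδ hβ)] at h2
  simp only [reflV'_reflV'] at h3
  rw [B.symm] at h1
  linarith

lemma exists_form_coroot_eq_nonneg_on_Δ {α : V} (hα : α ∈ D.R) :
    ∃ β ∈ D.R, B.form (D.coroot β) (D.coroot β) = B.form (D.coroot α) (D.coroot α) ∧
      ∀ δ ∈ D.Δ, 0 ≤ D.pair δ (D.coroot β) := by
  let S := D.R.filter fun β =>
    B.form (D.coroot β) (D.coroot β) = B.form (D.coroot α) (D.coroot α)
  obtain ⟨β, hβS, hmax⟩ := S.exists_max_image D.height ⟨α, Finset.mem_filter.2 ⟨hα, rfl⟩⟩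
  obtain ⟨hβ, hβα⟩ := Finset.mem_filter.1 hβS
  refine ⟨β, hβ, hβα, fun δ hδ => ?_⟩
  have hδR := D.base_subset hδ
  have hβδ : 0 ≤ D.pair β (D.coroot δ) := by
    have := hmax _ (Finset.mem_filter.2
      ⟨reflV_mem hδR hβ, (B.form_coroot_reflV hδR hβ).trans hβα⟩)
    rw [reflV_apply, map_sub, map_smul, D.height_of_mem_Δ hδ, smul_eq_mul, mul_one]
      at this
    linarith
  refine (mul_nonneg_iff_of_pos_right (B.form_coroot_pos hδR)).1 ?_
  rw [← B.pair_mul_form_coroot_comm hβ hδR]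
  exact mul_nonneg hβδ (B.form_coroot_pos hβ).le

section Highest

variable {γ : V} (hhigh : ∀ α ∈ D.R, γ - α ∈ AddSubmonoid.closure (D.Δ : Set V))
  (hγ : γ ∈ D.R)
include hhigh hγ

lemma two_mul_form_coroot_highest_le {β : V} (hβ : β ∈ D.R) (hne : β ≠ γ)
    (hdom : ∀ δ ∈ D.Δ, 0 ≤ D.pair δ (D.coroot β)) :
    2 * B.form (D.coroot γ) (D.coroot γ) ≤ B.form (D.coroot β) (D.coroot β) :=
  calc 2 * B.form (D.coroot γ) (D.coroot γ)
      ≤ D.pair γ (D.coroot β) * B.form (D.coroot γ) (D.coroot γ) :=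
        mul_le_mul_of_nonneg_right (two_le_pair_highest_coroot hhigh hβ hdom)
          (B.form_coroot_pos hγ).le
    _ = D.pair β (D.coroot γ) * B.form (D.coroot β) (D.coroot β) :=
        (B.pair_mul_form_coroot_comm hβ hγ).symm
    _ ≤ B.form (D.coroot β) (D.coroot β) :=
        mul_le_of_le_one_left (B.form_coroot_pos hβ).le
          (pair_coroot_highest_le_one hhigh hγ hβ hne)

lemma form_coroot_highest_le {α : V} (hα : α ∈ D.R) :
    B.form (D.coroot γ) (D.coroot γ) ≤ B.form (D.coroot α) (D.coroot α) := by
  obtain ⟨β, hβ, hβα, hdom⟩ := B.exists_form_coroot_eq_nonneg_on_Δ hα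
  rw [← hβα]
  rcases eq_or_ne β γ with rfl | hne
  · exact le_rfl
  · linarith [B.two_mul_form_coroot_highest_le hhigh hγ hβ hne hdom, B.form_coroot_pos hγ]

end Highest

end WInvInner

end RootSystemData

theorem highest_root_coroot_short_dominant_unique {V V' : Type} [AddCommGroup V] [Module ℝ V] [FiniteDimensional ℝ V]
    [AddCommGroup V'] [Module ℝ V'] [FiniteDimensional ℝ V']
    (D : RootSystemData V V')
    (hirr : ∀ α ∈ D.R, ∀ β ∈ D.R, D.SameComponent α β)
    (γ : V) (hγ : γ ∈ D.R)
    (hhigh : ∀ α ∈ D.R, γ - α ∈ AddSubmonoid.closure (D.Δ : Set V)) :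
    D.IsShortCoroot γ ∧ D.Dominant (D.coroot γ) ∧
      ∀ β ∈ D.R, D.IsShortCoroot β → D.Dominant (D.coroot β) →
        D.coroot β = D.coroot γ := by
  refine ⟨⟨hγ, fun B α hα _ => B.form_coroot_highest_le hhigh hγ hα⟩,
    RootSystemData.dominant_coroot_highest hhigh hγ, fun β hβ hshort hdom => ?_⟩
  rcases eq_or_ne β γ with rfl | hne
  · rfl
  obtain ⟨B⟩ := D.nonempty_wInvInner
  have hlong := B.two_mul_form_coroot_highest_le hhigh hγ hβ hne
    fun δ hδ => hdom δ (D.mem_Rpos_of_mem_Δ hδ)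
  have hle := hshort.2 B γ hγ (hirr γ hγ β hβ)
  linarith [B.form_coroot_pos hγ]

end
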